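/- arXiv:1403.1935 — 2 statements merged into one kernel-verified Lean document; each statement's English description precedes it below -/
import Mathlib

section
/- Let (X,⪯,G) be a G-complete partially ordered G-metric space that is regular non-decreasing, and let T : X → X be a map such that: (i) T is non-decreasing with respect to ⪯; (ii) there exists x₀ ∈ X with x₀ ⪯ T x₀; (iii) there exist ψ ∈ Ψ and φ ∈ Φ such that for all x, y, z ∈ X with x ⪯ y ⪯ z, ψ(G(Tx,Ty,Tz)) ≤ ψ(M(x,y,z)) − φ(M(x,y,z)). Then T has a fixed point. -/
open Filter Topology Set

/-- A G-metric on a set `X`, valued in `ℝ` (with values in `[0,∞)`). -/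
structure IsGMetric {X : Type*} (G : X → X → X → ℝ) : Prop where
  nonneg : ∀ x y z, 0 ≤ G x y z
  /-- (G1) -/
  eq_zero_of_eq : ∀ x, G x x x = 0
  /-- (G2) -/
  pos_of_ne : ∀ x y, x ≠ y → 0 < G x x y
  /-- (G3) -/
  le_of_ne : ∀ x y z, y ≠ z → G x x y ≤ G x y z
  /-- (G4): invariance under permutations (generated by these two transpositions) -/
  swap_left : ∀ x y z, G x y z = G y x z
  swap_right : ∀ x y z, G x y z = G x z y
  /-- (G5) rectangle inequality -/
  rect : ∀ x y z a, G x y z ≤ G x a a + G a y z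

/-- A sequence `s` G-converges to `x` iff `G x (s n) (s n) → 0`. -/
def GConvergesTo {X : Type*} (G : X → X → X → ℝ) (s : ℕ → X) (x : X) : Prop :=
  Tendsto (fun n => G x (s n) (s n)) atTop (𝓝 0)

/-- A sequence is G-Cauchy. -/
def GCauchy {X : Type*} (G : X → X → X → ℝ) (s : ℕ → X) : Prop :=
  ∀ ε > (0 : ℝ), ∃ N : ℕ, ∀ n ≥ N, ∀ m ≥ N, ∀ l ≥ N, G (s n) (s m) (s l) < ε

/-- `(X, G)` is G-complete. -/
def GComplete {X : Type*} (G : X → X → X → ℝ) : Prop :=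
  ∀ s : ℕ → X, GCauchy G s → ∃ x, GConvergesTo G s x

/-- `T` is G-continuous. -/
def GContinuousMap {X : Type*} (G : X → X → X → ℝ) (T : X → X) : Prop :=
  ∀ (s : ℕ → X) (x : X), GConvergesTo G s x → GConvergesTo G (fun n => T (s n)) (T x)

/-- `(X, ⪯, G)` is regular non-decreasing. -/
def RegularNondecreasing {X : Type*} [PartialOrder X] (G : X → X → X → ℝ) : Prop :=
  ∀ (s : ℕ → X) (x : X), Monotone s → GConvergesTo G s x → ∀ n, s n ≤ x

/-- Membership in the class `Ψ`: continuous, non-decreasing, nonnegative on `[0,∞)`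
and vanishing exactly at `0`. -/
def MemPsi (ψ : ℝ → ℝ) : Prop :=
  ContinuousOn ψ (Ici 0) ∧ MonotoneOn ψ (Ici 0) ∧
    (∀ t ≥ (0 : ℝ), 0 ≤ ψ t) ∧ (∀ t ≥ (0 : ℝ), (ψ t = 0 ↔ t = 0))

/-- Membership in the class `Φ`: lower semicontinuous, nonnegative on `[0,∞)`
and vanishing exactly at `0`. -/
def MemPhi (φ : ℝ → ℝ) : Prop :=
  LowerSemicontinuousOn φ (Ici 0) ∧
    (∀ t ≥ (0 : ℝ), 0 ≤ φ t) ∧ (∀ t ≥ (0 : ℝ), (φ t = 0 ↔ t = 0))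

/-- The quantity `M(x,y,z)` associated with `G` and `T`. -/
noncomputable def Mfun {X : Type*} (G : X → X → X → ℝ) (T : X → X) (x y z : X) : ℝ :=
  max (G x (T x) y) (max (G x (T x) z) (max (G x y z) (max (G y (T y) (T y))
    (max (G z (T z) (T z)) ((G x (T y) (T z) + G (T x) y z) / 2)))))

/-- The quantity `N(x,y)` associated with `G` and `T`. -/
noncomputable def Nfun {X : Type*} (G : X → X → X → ℝ) (T : X → X) (x y : X) : ℝ :=
  max (G x (T x) y) (max (G (T x) (T (T x)) (T (T x)))
    (max ((G x (T x) (T x) + G y (T y) (T y)) / 2)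
      ((G x (T (T x)) (T y) + G (T x) (T x) y) / 2)))

section AuxLemmas

variable {X : Type*} {G : X → X → X → ℝ}

private lemma gaab (hG : IsGMetric G) (a b : X) : G a a b ≤ 2 * G a b b := by
  have h := hG.rect a a b b
  rw [hG.swap_left b a b] at h
  linarith

private lemma gperm (hG : IsGMetric G) (a b : X) : G a a b = G b a a := by
  rw [hG.swap_right a a b, hG.swap_left a b a]

private lemma eq_of_gabb (hG : IsGMetric G) {a b : X} (h : G a b b = 0) : a = b := by
  by_contra hne
  have hp := hG.pos_of_ne b a (Ne.symm hne)
  rw [gperm hG b a] at hp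
  linarith

private lemma Mfun_le {T : X → X} {a b : X} {r : ℝ}
    (h1 : G a (T a) b ≤ r) (h2 : G a b b ≤ r) (h3 : G b (T b) (T b) ≤ r)
    (h4 : (G a (T b) (T b) + G (T a) b b) / 2 ≤ r) : Mfun G T a b b ≤ r := by
  unfold Mfun
  exact max_le h1 (max_le h1 (max_le h2 (max_le h3 (max_le h3 h4))))

private lemma le_Mfun_abb (T : X → X) (a b : X) : G a b b ≤ Mfun G T a b b := by
  unfold Mfun
  exact le_max_of_le_right (le_max_of_le_right (le_max_left _ _))

private lemma le_Mfun_b (T : X → X) (a b : X) : G b (T b) (T b) ≤ Mfun G T a b b := by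
  unfold Mfun
  exact le_max_of_le_right (le_max_of_le_right (le_max_of_le_right (le_max_left _ _)))

end AuxLemmas

theorem stmt1 {X : Type*} [Nonempty X] [PartialOrder X] (G : X → X → X → ℝ)
    (hG : IsGMetric G) (hcomp : GComplete G) (hreg : RegularNondecreasing G)
    (T : X → X) (hTmono : Monotone T)
    (x₀ : X) (hx₀ : x₀ ≤ T x₀)
    (ψ φ : ℝ → ℝ) (hψ : MemPsi ψ) (hφ : MemPhi φ)
    (hcontr : ∀ x y z : X, x ≤ y → y ≤ z →
      ψ (G (T x) (T y) (T z)) ≤ ψ (Mfun G T x y z) - φ (Mfun G T x y z)) :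
    ∃ x : X, T x = x := by
  classical
  obtain ⟨hψc, hψm, hψ0, hψz⟩ := hψ
  obtain ⟨hφl, hφ0, hφz⟩ := hφ
  -- the orbit
  set x : ℕ → X := fun n => T^[n] x₀ with hxdef
  have hxsucc : ∀ n, x (n + 1) = T (x n) := fun n => Function.iterate_succ_apply' T n x₀
  have hxmono : Monotone x := by
    apply monotone_nat_of_le_succ
    intro n
    induction n with
    | zero =>
        have h0 : x 0 = x₀ := rfl
        rw [hxsucc 0, h0]; exact hx₀
    | succ k ih =>
        have h' : T (x k) ≤ T (x (k + 1)) := hTmono ih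
        rwa [← hxsucc k, ← hxsucc (k + 1)] at h'
  set d : ℕ → ℝ := fun n => G (x n) (x (n + 1)) (x (n + 1)) with hddef
  have hdeq : ∀ n, G (x n) (x (n + 1)) (x (n + 1)) = d n := fun n => rfl
  have hd0le : ∀ n, 0 ≤ d n := fun n => hG.nonneg _ _ _
  -- if the orbit stabilizes, done
  by_cases hfix : ∃ n, x (n + 1) = x n
  · obtain ⟨n, hn⟩ := hfix
    exact ⟨x n, by rw [← hxsucc n]; exact hn⟩
  push_neg at hfix
  -- specialized contraction
  have hkey : ∀ p q, p ≤ q →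
      ψ (G (x (p + 1)) (x (q + 1)) (x (q + 1))) ≤
        ψ (Mfun G T (x p) (x q) (x q)) - φ (Mfun G T (x p) (x q) (x q)) := by
    intro p q hpq
    have h := hcontr (x p) (x q) (x q) (hxmono hpq) le_rfl
    rw [← hxsucc p, ← hxsucc q] at h
    exact h
  -- Step A : d is antitone and one-step inequality
  have hstepA : ∀ n, d (n + 1) ≤ d n ∧ ψ (d (n + 1)) ≤ ψ (d n) - φ (d n) := by
    intro n
    have hM : Mfun G T (x n) (x (n + 1)) (x (n + 1)) = max (d n) (d (n + 1)) := by
      apply le_antisymm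
      · apply Mfun_le
        · rw [← hxsucc n, hdeq n]; exact le_max_left _ _
        · rw [hdeq n]; exact le_max_left _ _
        · rw [← hxsucc (n + 1), hdeq (n + 1)]; exact le_max_right _ _
        · rw [← hxsucc n, ← hxsucc (n + 1), hG.eq_zero_of_eq (x (n + 1))]
          have hr := hG.rect (x n) (x (n + 1 + 1)) (x (n + 1 + 1)) (x (n + 1))
          rw [hdeq n, hdeq (n + 1)] at hr
          have h1 : d n ≤ max (d n) (d (n + 1)) := le_max_left _ _
          have h2 : d (n + 1) ≤ max (d n) (d (n + 1)) := le_max_right _ _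
          linarith
      · apply max_le
        · rw [← hdeq n]; exact le_Mfun_abb T _ _
        · rw [← hdeq (n + 1)]
          have := le_Mfun_b (G := G) T (x n) (x (n + 1))
          rwa [← hxsucc (n + 1)] at this
    have hc := hkey n (n + 1) (Nat.le_succ n)
    rw [hM, hdeq (n + 1)] at hc
    by_cases hle : d (n + 1) ≤ d n
    · rw [max_eq_left hle] at hc; exact ⟨hle, hc⟩
    · push_neg at hle
      rw [max_eq_right hle.le] at hc
      have hφn : 0 ≤ φ (d (n + 1)) := hφ0 _ (hd0le _)
      have hz' : φ (d (n + 1)) = 0 := by linarith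
      have hdz : d (n + 1) = 0 := (hφz _ (hd0le _)).1 hz'
      have := hd0le n
      exfalso; rw [hdz] at hle; linarith
  have hdant : Antitone d := antitone_nat_of_succ_le fun n => (hstepA n).1
  -- Step B : d → 0
  have hbdd : BddBelow (Set.range d) := ⟨0, by rintro r ⟨n, rfl⟩; exact hd0le n⟩
  have hdtend : Tendsto d atTop (𝓝 (⨅ n, d n)) := tendsto_atTop_ciInf hdant hbdd
  have hL0 : 0 ≤ ⨅ n, d n := le_ciInf hd0le
  have hLzero : (⨅ n, d n) = 0 := by
    by_contra hne
    set L := ⨅ n, d n with hLdef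
    have hLpos : 0 < L := lt_of_le_of_ne hL0 (Ne.symm hne)
    have hφLne : φ L ≠ 0 := fun h => hne ((hφz L hL0).1 h)
    have hφL : 0 < φ L := lt_of_le_of_ne (hφ0 L hL0) (Ne.symm hφLne)
    have hev := hφl L hL0 (φ L / 2) (by linarith)
    have htend' : Tendsto d atTop (𝓝[Ici 0] L) :=
      tendsto_nhdsWithin_iff.2 ⟨hdtend, Eventually.of_forall hd0le⟩
    obtain ⟨N, hN⟩ := (htend'.eventually hev).exists_forall_of_atTop
    have hiter : ∀ j : ℕ, ψ (d (N + j)) + j * (φ L / 2) ≤ ψ (d N) := by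
      intro j
      induction j with
      | zero => simp
      | succ k ih =>
          have h1 := (hstepA (N + k)).2
          have h2 : φ L / 2 < φ (d (N + k)) := hN (N + k) (Nat.le_add_right _ _)
          have : (N + (k + 1)) = (N + k) + 1 := rfl
          rw [this]
          push_cast
          push_cast at ih
          linarith
    obtain ⟨j, hj⟩ := exists_nat_gt (ψ (d N) / (φ L / 2))
    have hjc : ψ (d N) < j * (φ L / 2) := by
      rw [div_lt_iff₀ (by linarith)] at hj; linarith
    have := hiter j
    have := hψ0 (d (N + j)) (hd0le _)
    linarith
  have hd0 : Tendsto d atTop (𝓝 0) := hLzero ▸ hdtend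
  -- Step C : the orbit is "g-Cauchy"
  have hCau : ∀ ε > (0 : ℝ), ∃ N, ∀ n m, N ≤ n → n ≤ m → G (x n) (x m) (x m) < ε := by
    by_contra hnc
    push_neg at hnc
    obtain ⟨ε, hε, hnc⟩ := hnc
    -- crossing construction
    have hcross : ∀ k, ∃ p q, k ≤ p ∧ p + 1 ≤ q ∧
        G (x (p + 1)) (x q) (x q) < ε ∧ ε ≤ G (x (p + 1)) (x (q + 1)) (x (q + 1))  := by
      intro k
      obtain ⟨n, m, hkn, hnm, hge⟩ := hnc (k + 1)
      obtain ⟨p, rfl⟩ : ∃ p, n = p + 1 := ⟨n - 1, by omega⟩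
      have hS : ∃ j, ε ≤ G (x (p + 1)) (x (p + 1 + 1 + j)) (x (p + 1 + 1 + j)) := by
        have hmn : p + 1 < m := by
          rcases eq_or_lt_of_le hnm with h | h
          · exfalso; rw [← h, hG.eq_zero_of_eq] at hge; linarith
          · exact h
        exact ⟨m - (p + 1 + 1), by rwa [show p + 1 + 1 + (m - (p + 1 + 1)) = m by omega]⟩
      refine ⟨p, p + 1 + Nat.find hS, by omega, by omega, ?_, ?_⟩
      · rcases Nat.eq_zero_or_pos (Nat.find hS) with h0 | hpos
        · rw [h0]
          simpa [hG.eq_zero_of_eq] using hε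
        · obtain ⟨j', hj'⟩ : ∃ j', Nat.find hS = j' + 1 := ⟨Nat.find hS - 1, by omega⟩
          have hmin := Nat.find_min hS (m := j') (by omega)
          rw [show p + 1 + Nat.find hS = p + 1 + 1 + j' by omega]
          exact lt_of_not_ge hmin
      · have := Nat.find_spec hS
        rwa [show p + 1 + Nat.find hS + 1 = p + 1 + 1 + Nat.find hS by omega]
    -- φ is positive at ε and lower semicontinuous there
    have hφε : 0 < φ ε :=
      lt_of_le_of_ne (hφ0 ε hε.le) (Ne.symm (fun h => hε.ne' ((hφz ε hε.le).1 h)))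
    obtain ⟨δ₁, hδ₁, hδ₁p⟩ : ∃ δ > (0:ℝ), ∀ t, 0 ≤ t → |t - ε| < δ → φ ε / 2 < φ t := by
      have hev := hφl ε hε.le (φ ε / 2) (by linarith)
      rw [Filter.eventually_iff, Metric.mem_nhdsWithin_iff] at hev
      obtain ⟨δ, hδ, hsub⟩ := hev
      exact ⟨δ, hδ, fun t ht hdist => hsub ⟨by rwa [Metric.mem_ball, Real.dist_eq], ht⟩⟩
    obtain ⟨δ₂, hδ₂, hδ₂p⟩ : ∃ δ > (0:ℝ), ∀ t, 0 ≤ t → |t - ε| < δ →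
        |ψ t - ψ ε| < φ ε / 2 := by
      have hc := hψc ε (mem_Ici.2 hε.le)
      rw [Metric.continuousWithinAt_iff] at hc
      obtain ⟨δ, hδ, hp⟩ := hc (φ ε / 2) (by linarith)
      exact ⟨δ, hδ, fun t ht hdist => by
        have := hp (mem_Ici.2 ht) (by rwa [Real.dist_eq])
        rwa [Real.dist_eq] at this⟩
    -- choose k with d k small
    set η := min δ₁ δ₂ with hη
    have hηpos : 0 < η := lt_min hδ₁ hδ₂
    obtain ⟨K, hK⟩ := (hd0.eventually (gt_mem_nhds (show (0:ℝ) < η / 3 by linarith))).exists_forall_of_atTop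
    have hdK : d K < η / 3 := hK K le_rfl
    obtain ⟨p, q, hkp, hpq, hlt, hge⟩ := hcross K
    -- abbreviations
    have he1 : d p ≤ d K := hdant hkp
    have he2 : d q ≤ d K := hdant (by omega)
    have hbne : x q ≠ x (q + 1) := fun h => hfix q h.symm
    -- bounds on the M-value
    set M := Mfun G T (x p) (x q) (x q) with hMdef
    have hM0 : 0 ≤ M := (hG.nonneg (x p) (x q) (x q)).trans (le_Mfun_abb T _ _)
    have hMub : M ≤ ε + 3 * d K := by
      apply Mfun_le
      · -- G (x p) (T (x p)) (x q) ≤ ε + 3 d K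
        rw [← hxsucc p]
        have s1 := hG.rect (x p) (x (p + 1)) (x q) (x (p + 1))
        have s2 : G (x (p + 1)) (x (p + 1)) (x q) ≤ G (x (p + 1)) (x q) (x (q + 1)) :=
          hG.le_of_ne _ _ _ hbne
        have s3 : G (x (p + 1)) (x q) (x (q + 1)) = G (x (q + 1)) (x (p + 1)) (x q) := by
          rw [hG.swap_right (x (p + 1)) (x q) (x (q + 1)),
            hG.swap_left (x (p + 1)) (x (q + 1)) (x q)]
        have s4 := hG.rect (x (q + 1)) (x (p + 1)) (x q) (x q)
        have s5 : G (x (q + 1)) (x q) (x q) = G (x q) (x q) (x (q + 1)) := (gperm hG _ _).symm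
        have s6 := gaab hG (x q) (x (q + 1))
        have s7 : G (x q) (x (p + 1)) (x q) = G (x (p + 1)) (x q) (x q) := by
          rw [hG.swap_left (x q) (x (p + 1)) (x q)]
        rw [hdeq p] at s1
        rw [hdeq q] at s6
        linarith [hd0le K]
      · -- G (x p) (x q) (x q) ≤ ε + 3 d K
        have s1 := hG.rect (x p) (x q) (x q) (x (p + 1))
        rw [hdeq p] at s1
        linarith [hd0le K]
      · -- G (x q) (T (x q)) (T (x q)) = d q
        rw [← hxsucc q, hdeq q]
        linarith [hd0le K]
      · -- half-sum term
        rw [← hxsucc p, ← hxsucc q]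
        have s1 := hG.rect (x p) (x (q + 1)) (x (q + 1)) (x (p + 1))
        have s2 := hG.rect (x (p + 1)) (x (q + 1)) (x (q + 1)) (x q)
        rw [hdeq p] at s1
        rw [hdeq q] at s2
        linarith [hd0le K]
    have hMlb : ε - 3 * d K ≤ M := by
      have s1 := hG.rect (x (p + 1)) (x (q + 1)) (x (q + 1)) (x p)
      have s2 : G (x (p + 1)) (x p) (x p) = G (x p) (x p) (x (p + 1)) := (gperm hG _ _).symm
      have s3 := gaab hG (x p) (x (p + 1))
      have s4 := hG.rect (x p) (x (q + 1)) (x (q + 1)) (x q)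
      have s5 : G (x p) (x q) (x q) ≤ M := le_Mfun_abb T _ _
      rw [hdeq p] at s3
      rw [hdeq q] at s4
      linarith [hd0le K]
    -- final contradiction
    have hc := hkey p q (by omega)
    rw [← hMdef] at hc
    have hψmono : ψ ε ≤ ψ (G (x (p + 1)) (x (q + 1)) (x (q + 1))) :=
      hψm (mem_Ici.2 hε.le) (mem_Ici.2 (hG.nonneg _ _ _)) hge
    have hMd : |M - ε| < η := by
      rw [abs_lt]; constructor <;> linarith
    have h1 : φ ε / 2 < φ M := hδ₁p M hM0 (lt_of_lt_of_le hMd (min_le_left _ _))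
    have h2 : |ψ M - ψ ε| < φ ε / 2 := hδ₂p M hM0 (lt_of_lt_of_le hMd (min_le_right _ _))
    rw [abs_lt] at h2
    linarith
  -- Step D : the orbit is G-Cauchy
  have hGC : GCauchy G x := by
    intro ε hε
    obtain ⟨N, hN⟩ := hCau (ε / 7) (by linarith)
    have hpair : ∀ n m, N ≤ n → N ≤ m → G (x n) (x m) (x m) ≤ 2 * (ε / 7) := by
      intro n m hn hm
      rcases le_total n m with h | h
      · linarith [hN n m hn h, hε]
      · have h1 : G (x n) (x m) (x m) = G (x m) (x m) (x n) := (gperm hG _ _).symm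
        have h2 := gaab hG (x m) (x n)
        have h3 := hN m n hm h
        linarith
    refine ⟨N, fun n hn m hm l hl => ?_⟩
    have h1 := hG.rect (x n) (x m) (x l) (x m)
    have h2 := gaab hG (x m) (x l)
    have h3 := hpair n m hn hm
    have h4 := hpair m l hm hl
    have h5 : G (x n) (x m) (x m) = G (x n) (x m) (x m) := rfl
    have h6 : G (x n) (x m) (x m) ≥ 0 := hG.nonneg _ _ _
    linarith
  -- Step E : pass to the limit
  obtain ⟨z, hz⟩ := hcomp x hGC
  have hlez : ∀ n, x n ≤ z := hreg x z hxmono hz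
  refine ⟨z, ?_⟩
  by_contra hne
  have hr : 0 < G z (T z) (T z) := by
    have hp := hG.pos_of_ne (T z) z (fun h => hne h)
    rw [gperm hG (T z) z, hG.swap_right z (T z) (T z)] at hp
    exact hp
  set r := G z (T z) (T z) with hrdef
  set c : ℕ → ℝ := fun n => G z (x n) (x n) with hcdef
  have hceq : ∀ n, G z (x n) (x n) = c n := fun _ => rfl
  have hc0le : ∀ n, 0 ≤ c n := fun n => hG.nonneg _ _ _
  have hctend : Tendsto c atTop (𝓝 0) := hz
  -- δ's at r
  have hφr : 0 < φ r :=
    lt_of_le_of_ne (hφ0 r hr.le) (Ne.symm (fun h => hr.ne' ((hφz r hr.le).1 h)))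
  obtain ⟨δ₁, hδ₁, hδ₁p⟩ : ∃ δ > (0:ℝ), ∀ t, 0 ≤ t → |t - r| < δ → φ r / 2 < φ t := by
    have hev := hφl r hr.le (φ r / 2) (by linarith)
    rw [Filter.eventually_iff, Metric.mem_nhdsWithin_iff] at hev
    obtain ⟨δ, hδ, hsub⟩ := hev
    exact ⟨δ, hδ, fun t ht hdist => hsub ⟨by rwa [Metric.mem_ball, Real.dist_eq], ht⟩⟩
  obtain ⟨δ₂, hδ₂, hδ₂p⟩ : ∃ δ > (0:ℝ), ∀ t, 0 ≤ t → |t - r| < δ →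
      |ψ t - ψ r| < φ r / 4 := by
    have hcw := hψc r (mem_Ici.2 hr.le)
    rw [Metric.continuousWithinAt_iff] at hcw
    obtain ⟨δ, hδ, hp⟩ := hcw (φ r / 4) (by linarith)
    exact ⟨δ, hδ, fun t ht hdist => by
      have := hp (mem_Ici.2 ht) (by rwa [Real.dist_eq])
      rwa [Real.dist_eq] at this⟩
  -- pick n with c n, c (n+1) small
  set θ := min (min δ₁ δ₂) r / 4 with hθ
  have hθpos : 0 < θ := by
    have := lt_min hδ₁ hδ₂
    have := lt_min this hr
    rw [hθ]; linarith
  obtain ⟨N, hN⟩ := (hctend.eventually (gt_mem_nhds hθpos)).exists_forall_of_atTop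
  have hcN : c N < θ := hN N le_rfl
  have hcN1 : c (N + 1) < θ := hN (N + 1) (Nat.le_succ N)
  have hθδ₁ : 4 * θ ≤ δ₁ := by
    rw [hθ]
    have h1 : min (min δ₁ δ₂) r ≤ min δ₁ δ₂ := min_le_left _ _
    have h2 : min δ₁ δ₂ ≤ δ₁ := min_le_left _ _
    linarith
  have hθδ₂ : 4 * θ ≤ δ₂ := by
    rw [hθ]
    have h1 : min (min δ₁ δ₂) r ≤ min δ₁ δ₂ := min_le_left _ _
    have h2 : min δ₁ δ₂ ≤ δ₂ := min_le_right _ _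
    linarith
  have hθr : 4 * θ ≤ r := by
    rw [hθ]
    have h1 : min (min δ₁ δ₂) r ≤ r := min_le_right _ _
    linarith
  -- bounds on M
  set M := Mfun G T (x N) z z with hMdef
  have hM0 : 0 ≤ M := (hG.nonneg (x N) z z).trans (le_Mfun_abb T _ _)
  have hxzz : ∀ n, G (x n) z z ≤ 2 * c n := by
    intro n
    have h1 : G (x n) z z = G z z (x n) := by
      rw [hG.swap_left (x n) z z, hG.swap_right z (x n) z]
    have h2 := gaab hG z (x n)
    rw [hceq n] at h2
    linarith [h1.le, h1.ge]
  have hrle : r ≤ M := by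
    have := le_Mfun_b (G := G) T (x N) z
    rw [← hrdef] at this; exact this
  have hMub : M ≤ r + 2 * c N + 2 * c (N + 1) := by
    apply Mfun_le
    · -- G (x N) (T (x N)) z
      rw [← hxsucc N]
      have s1 := hG.rect (x N) (x (N + 1)) z z
      have s2 : G z (x (N + 1)) z = G z z (x (N + 1)) := hG.swap_right _ _ _
      have s3 := gaab hG z (x (N + 1))
      rw [hceq (N + 1)] at s3
      have s4 := hxzz N
      linarith [hr.le]
    · have := hxzz N
      linarith [hc0le (N + 1), hr.le]
    · -- G z (T z) (T z) = r
      rw [← hrdef]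
      linarith [hc0le N, hc0le (N + 1)]
    · -- half sum
      rw [← hxsucc N]
      have s1 := hG.rect (x N) (T z) (T z) z
      rw [← hrdef] at s1
      have s2 := hxzz N
      have s3 := hxzz (N + 1)
      linarith [hr.le, hc0le N, hc0le (N + 1)]
  have hMd : |M - r| < min δ₁ δ₂ := by
    rw [abs_lt]
    constructor
    · have := min_le_left δ₁ δ₂
      have h4 : 0 < min δ₁ δ₂ := lt_min hδ₁ hδ₂
      linarith
    · have h2 : 4 * θ ≤ min δ₁ δ₂ := le_min hθδ₁ hθδ₂
      linarith
  -- final contradiction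
  have hcE := hcontr (x N) z z (hlez N) le_rfl
  rw [← hxsucc N, ← hMdef] at hcE
  set v := G (x (N + 1)) (T z) (T z) with hvdef
  have hv0 : 0 ≤ v := hG.nonneg _ _ _
  have hvlb : r - c (N + 1) ≤ v := by
    have s1 := hG.rect z (T z) (T z) (x (N + 1))
    rw [← hrdef, hceq (N + 1), ← hvdef] at s1
    linarith
  have hrc0 : 0 ≤ r - c (N + 1) := by linarith
  have h1 : ψ (r - c (N + 1)) ≤ ψ v := hψm (mem_Ici.2 hrc0) (mem_Ici.2 hv0) hvlb
  have h2 : |ψ (r - c (N + 1)) - ψ r| < φ r / 4 := by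
    apply hδ₂p _ hrc0
    rw [abs_lt]
    constructor <;> linarith [hc0le (N + 1)]
  have h3 : |ψ M - ψ r| < φ r / 4 :=
    hδ₂p M hM0 (lt_of_lt_of_le hMd (min_le_right _ _))
  have h4 : φ r / 2 < φ M := hδ₁p M hM0 (lt_of_lt_of_le hMd (min_le_left _ _))
  rw [abs_lt] at h2 h3
  linarith
end

section
/- Let (X,⪯,G) be a G-complete partially ordered G-metric space and let T : X → X be a G-continuous map that is non-decreasing with respect to ⪯ and satisfies x₀ ⪯ T x₀ for some x₀ ∈ X. Suppose there exist ψ ∈ Ψ and φ ∈ Φ such that for all x, y, z ∈ X with x ⪯ y ⪯ z, ψ(G(Tx,Ty,Tz)) ≤ ψ(G(x,y,z)) − φ(G(x,y,z)). Then T has a fixed point in X. -/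
open Filter Topology Set

section AuxLemmas

variable {X : Type*} {G : X → X → X → ℝ}

lemma IsGMetric.perm1 (hG : IsGMetric G) (x y : X) : G x y y = G y y x := by
  rw [hG.swap_left, hG.swap_right]

lemma IsGMetric.perm2 (hG : IsGMetric G) (x y : X) : G x x y = G y x x := by
  rw [hG.swap_right, hG.swap_left]

lemma IsGMetric.twoMul (hG : IsGMetric G) (x y : X) : G x y y ≤ 2 * G y x x := by
  have h := hG.rect y y x x
  have h1 : G x y x = G y x x := by rw [hG.swap_left]
  have h2 : G x y y = G y y x := hG.perm1 x y
  linarith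

lemma IsGMetric.gpos (hG : IsGMetric G) {x y : X} (h : x ≠ y) : 0 < G x y y := by
  rw [hG.perm1]
  exact hG.pos_of_ne y x h.symm

lemma IsGMetric.gzero (hG : IsGMetric G) {x y : X} (h : G x y y = 0) : x = y := by
  by_contra hne
  exact (hG.gpos hne).ne' h

end AuxLemmas

private lemma key_aux {ψ φ : ℝ → ℝ}
    (hψc : ContinuousOn ψ (Ici 0))
    (hφc : LowerSemicontinuousOn φ (Ici 0))
    (hφ0 : ∀ t ≥ (0 : ℝ), 0 ≤ φ t) (hφiff : ∀ t ≥ (0 : ℝ), (φ t = 0 ↔ t = 0))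
    {a b : ℕ → ℝ} {L : ℝ} (hL : 0 < L)
    (ha0 : ∀ n, 0 ≤ a n)
    (ha : Tendsto a atTop (𝓝 L))
    (hb0 : ∀ n, 0 ≤ b n)
    (hb : Tendsto b atTop (𝓝 L))
    (hstep : ∀ n, ψ (b n) ≤ ψ (a n) - φ (a n)) : False := by
  have hLmem : L ∈ Ici (0 : ℝ) := hL.le
  have haw : Tendsto a atTop (𝓝[Ici (0:ℝ)] L) :=
    tendsto_nhdsWithin_of_tendsto_nhds_of_eventually_within a ha
      (Eventually.of_forall fun n => ha0 n)
  have hbw : Tendsto b atTop (𝓝[Ici (0:ℝ)] L) :=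
    tendsto_nhdsWithin_of_tendsto_nhds_of_eventually_within b hb
      (Eventually.of_forall fun n => hb0 n)
  have hψLa : Tendsto ψ (𝓝[Ici (0:ℝ)] L) (𝓝 (ψ L)) := hψc L hLmem
  have h1 : Tendsto (fun n => ψ (a n)) atTop (𝓝 (ψ L)) := hψLa.comp haw
  have h2 : Tendsto (fun n => ψ (b n)) atTop (𝓝 (ψ L)) := hψLa.comp hbw
  have hφL : 0 < φ L :=
    lt_of_le_of_ne (hφ0 L hL.le) fun h => hL.ne' ((hφiff L hL.le).mp h.symm)
  have hev1 : ∀ᶠ n in atTop, φ L / 2 < φ (a n) :=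
    haw.eventually (hφc L hLmem (φ L / 2) (half_lt_self hφL))
  have hdiff : Tendsto (fun n => ψ (a n) - ψ (b n)) atTop (𝓝 0) := by
    simpa using h1.sub h2
  have hev2 : ∀ᶠ n in atTop, ψ (a n) - ψ (b n) < φ L / 2 :=
    hdiff.eventually (eventually_lt_nhds (half_pos hφL))
  obtain ⟨n, h1n, h2n⟩ := (hev1.and hev2).exists
  have := hstep n
  linarith

theorem stmt5 {X : Type*} [Nonempty X] [PartialOrder X] (G : X → X → X → ℝ)
    (hG : IsGMetric G) (hcomp : GComplete G) (T : X → X)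
    (hTcont : GContinuousMap G T) (hTmono : Monotone T)
    (x₀ : X) (hx₀ : x₀ ≤ T x₀)
    (ψ φ : ℝ → ℝ) (hψ : MemPsi ψ) (hφ : MemPhi φ)
    (hcontr : ∀ x y z : X, x ≤ y → y ≤ z →
      ψ (G (T x) (T y) (T z)) ≤ ψ (G x y z) - φ (G x y z)) :
    ∃ x : X, T x = x := by
  classical
  obtain ⟨hψc, hψm, hψ0, hψiff⟩ := hψ
  obtain ⟨hφc, hφ0, hφiff⟩ := hφ
  obtain ⟨s, hsdef⟩ : ∃ s : ℕ → X, ∀ n, s n = T^[n] x₀ := ⟨_, fun _ => rfl⟩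
  have hs0 : s 0 = x₀ := by rw [hsdef]; rfl
  have hssucc : ∀ n, s (n + 1) = T (s n) := by
    intro n; rw [hsdef, hsdef]; exact Function.iterate_succ_apply' T n x₀
  have hmono : Monotone s := by
    apply monotone_nat_of_le_succ
    intro n
    induction n with
    | zero => rw [hssucc 0, hs0]; exact hx₀
    | succ k ih =>
      rw [hssucc (k + 1)]
      rw [hssucc k] at ih ⊢
      exact hTmono ih
  by_cases hfp : ∃ n, T (s n) = s n
  · obtain ⟨n, hn⟩ := hfp; exact ⟨s n, hn⟩
  push_neg at hfp
  have hne : ∀ n, s n ≠ s (n + 1) := by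
    intro n h
    exact hfp n (by rw [← hssucc n]; exact h.symm)
  obtain ⟨g, hgdef⟩ : ∃ g : ℕ → ℝ, ∀ n, g n = G (s n) (s (n+1)) (s (n+1)) :=
    ⟨_, fun _ => rfl⟩
  have hgpos : ∀ n, 0 < g n := by
    intro n; rw [hgdef]; exact hG.gpos (hne n)
  have hstep : ∀ n, ψ (g (n + 1)) ≤ ψ (g n) - φ (g n) := by
    intro n
    have h := hcontr (s n) (s (n + 1)) (s (n + 1)) (hmono n.le_succ) le_rfl
    rw [← hssucc n, ← hssucc (n + 1)] at h
    rw [hgdef (n + 1), hgdef n]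
    exact h
  have hganti : ∀ n, g (n + 1) ≤ g n := by
    intro n
    by_contra hlt
    push_neg at hlt
    have h1 : ψ (g n) ≤ ψ (g (n + 1)) :=
      hψm (mem_Ici.mpr (hgpos n).le) (mem_Ici.mpr (hgpos (n + 1)).le) hlt.le
    have h2 : 0 < φ (g n) :=
      lt_of_le_of_ne (hφ0 _ (hgpos n).le)
        (fun h => (hgpos n).ne' ((hφiff _ (hgpos n).le).mp h.symm))
    linarith [hstep n]
  have hbdd : BddBelow (range g) := ⟨0, by rintro x ⟨n, rfl⟩; exact (hgpos n).le⟩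
  have hanti : Antitone g := antitone_nat_of_succ_le hganti
  have hglim : Tendsto g atTop (𝓝 (⨅ n, g n)) := tendsto_atTop_ciInf hanti hbdd
  have hshift : Tendsto (fun n => g (n + 1)) atTop (𝓝 (⨅ n, g n)) :=
    hglim.comp (tendsto_atTop_mono (fun k => Nat.le_succ k) tendsto_id)
  have hinf0 : (⨅ n, g n) = 0 := by
    by_contra hr
    have hrpos : 0 < ⨅ n, g n :=
      lt_of_le_of_ne (le_ciInf fun n => (hgpos n).le) (Ne.symm hr)
    exact key_aux hψc hφc hφ0 hφiff hrpos (fun n => (hgpos n).le) hglim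
      (fun n => (hgpos _).le) hshift hstep
  have hg0 : Tendsto g atTop (𝓝 0) := hinf0 ▸ hglim
  -- pairwise Cauchy property
  have hC : ∀ ε > (0 : ℝ), ∃ N, ∀ n ≥ N, ∀ m ≥ N, G (s n) (s m) (s m) < ε := by
    by_contra hcon
    push_neg at hcon
    obtain ⟨ε, hε, hcon⟩ := hcon
    have hε2 : 0 < ε / 2 := by positivity
    have hpair : ∀ N, ∃ q : ℕ × ℕ,
        N ≤ q.1 ∧ q.1 < q.2 ∧ ε / 2 ≤ G (s q.1) (s q.2) (s q.2) := by
      intro N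
      obtain ⟨a, ha, b, hb, hab⟩ := hcon N
      rcases lt_trichotomy a b with h | h | h
      · exact ⟨(a, b), ha, h, le_trans (by linarith) hab⟩
      · exfalso; subst h; rw [hG.eq_zero_of_eq] at hab; linarith
      · refine ⟨(b, a), hb, h, ?_⟩
        have := hG.twoMul (s a) (s b)
        linarith
    choose q hq1 hq2 hq3 using hpair
    have hPk : ∀ k, ∃ j, (q k).1 < j ∧ ε / 2 ≤ G (s (q k).1) (s j) (s j) :=
      fun k => ⟨(q k).2, hq2 k, hq3 k⟩
    obtain ⟨n, hndef⟩ : ∃ n : ℕ → ℕ, ∀ k, n k = (q k).1 := ⟨_, fun _ => rfl⟩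
    have hPk' : ∀ k, ∃ j, n k < j ∧ ε / 2 ≤ G (s (n k)) (s j) (s j) := by
      intro k; rw [hndef]; exact hPk k
    obtain ⟨m, hmdef⟩ : ∃ m : ℕ → ℕ, ∀ k, m k = Nat.find (hPk' k) := ⟨_, fun _ => rfl⟩
    have hkn : ∀ k, k ≤ n k := by intro k; rw [hndef]; exact hq1 k
    have hm1 : ∀ k, n k < m k := by
      intro k; rw [hmdef]; exact (Nat.find_spec (hPk' k)).1
    have hm2 : ∀ k, ε / 2 ≤ G (s (n k)) (s (m k)) (s (m k)) := by
      intro k; rw [hmdef]; exact (Nat.find_spec (hPk' k)).2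
    have hmin : ∀ k j, j < m k → n k < j → G (s (n k)) (s j) (s j) < ε / 2 := by
      intro k j hj hnj
      rw [hmdef] at hj
      have := Nat.find_min (hPk' k) hj
      push_neg at this
      exact this hnj
    have hub : ∀ k, G (s (n k)) (s (m k)) (s (m k)) < ε / 2 + g (m k - 1) := by
      intro k
      have h0 := hm1 k
      have hpos : 0 < m k := lt_of_le_of_lt (Nat.zero_le _) (hm1 k)
      have hj : m k - 1 + 1 = m k := Nat.succ_pred_eq_of_pos hpos
      have h1 : G (s (n k)) (s (m k)) (s (m k)) ≤
          G (s (n k)) (s (m k - 1)) (s (m k - 1)) + G (s (m k - 1)) (s (m k)) (s (m k)) :=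
        hG.rect _ _ _ _
      have h2 : G (s (n k)) (s (m k - 1)) (s (m k - 1)) < ε / 2 := by
        rcases eq_or_lt_of_le (Nat.le_of_lt_succ (by omega : n k < m k - 1 + 1)) with h | h
        · rw [← h, hG.eq_zero_of_eq]; exact hε2
        · exact hmin k (m k - 1) (by omega) h
      have h3 : G (s (m k - 1)) (s (m k)) (s (m k)) = g (m k - 1) := by
        rw [hgdef, hj]
      linarith
    have hgcomp : ∀ f : ℕ → ℕ, (∀ k, k ≤ f k) →
        Tendsto (fun k => g (f k)) atTop (𝓝 0) :=
      fun f hf => hg0.comp (tendsto_atTop_mono hf tendsto_id)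
    have hgm1 : Tendsto (fun k => g (m k - 1)) atTop (𝓝 0) :=
      hgcomp (fun k => m k - 1)
        (fun k => by have h0 := hm1 k; have h1 := hkn k; show k ≤ m k - 1; omega)
    have hgn : Tendsto (fun k => g (n k)) atTop (𝓝 0) := hgcomp n hkn
    have hgm : Tendsto (fun k => g (m k)) atTop (𝓝 0) :=
      hgcomp m (fun k => by have := hm1 k; have := hkn k; omega)
    have hDlim : Tendsto (fun k => G (s (n k)) (s (m k)) (s (m k))) atTop (𝓝 (ε / 2)) := by
      refine tendsto_of_tendsto_of_tendsto_of_le_of_le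
        (tendsto_const_nhds : Tendsto (fun _ : ℕ => ε / 2) atTop (𝓝 (ε / 2)))
        ?_ hm2 (fun k => (hub k).le)
      simpa using
        (tendsto_const_nhds : Tendsto (fun _ : ℕ => ε / 2) atTop (𝓝 (ε / 2))).add hgm1
    have hElb : ∀ k, G (s (n k)) (s (m k)) (s (m k)) - g (n k) - 2 * g (m k) ≤
        G (s (n k + 1)) (s (m k + 1)) (s (m k + 1)) := by
      intro k
      have t1 : G (s (n k)) (s (m k)) (s (m k)) ≤
          G (s (n k)) (s (n k + 1)) (s (n k + 1)) + G (s (n k + 1)) (s (m k)) (s (m k)) :=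
        hG.rect _ _ _ _
      have t2 : G (s (n k + 1)) (s (m k)) (s (m k)) ≤
          G (s (n k + 1)) (s (m k + 1)) (s (m k + 1)) + G (s (m k + 1)) (s (m k)) (s (m k)) :=
        hG.rect _ _ _ _
      have t3 : G (s (m k + 1)) (s (m k)) (s (m k)) ≤
          2 * G (s (m k)) (s (m k + 1)) (s (m k + 1)) := hG.twoMul _ _
      have e1 : g (n k) = G (s (n k)) (s (n k + 1)) (s (n k + 1)) := hgdef _
      have e2 : g (m k) = G (s (m k)) (s (m k + 1)) (s (m k + 1)) := hgdef _
      linarith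
    have hEub : ∀ k, G (s (n k + 1)) (s (m k + 1)) (s (m k + 1)) ≤
        2 * g (n k) + G (s (n k)) (s (m k)) (s (m k)) + g (m k) := by
      intro k
      have t1 : G (s (n k + 1)) (s (m k + 1)) (s (m k + 1)) ≤
          G (s (n k + 1)) (s (n k)) (s (n k)) + G (s (n k)) (s (m k + 1)) (s (m k + 1)) :=
        hG.rect _ _ _ _
      have t2 : G (s (n k)) (s (m k + 1)) (s (m k + 1)) ≤
          G (s (n k)) (s (m k)) (s (m k)) + G (s (m k)) (s (m k + 1)) (s (m k + 1)) :=
        hG.rect _ _ _ _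
      have t3 : G (s (n k + 1)) (s (n k)) (s (n k)) ≤
          2 * G (s (n k)) (s (n k + 1)) (s (n k + 1)) := hG.twoMul _ _
      have e1 : g (n k) = G (s (n k)) (s (n k + 1)) (s (n k + 1)) := hgdef _
      have e2 : g (m k) = G (s (m k)) (s (m k + 1)) (s (m k + 1)) := hgdef _
      linarith
    have hElim : Tendsto (fun k => G (s (n k + 1)) (s (m k + 1)) (s (m k + 1)))
        atTop (𝓝 (ε / 2)) := by
      refine tendsto_of_tendsto_of_tendsto_of_le_of_le ?_ ?_ hElb hEub
      · simpa using (hDlim.sub hgn).sub (hgm.const_mul 2)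
      · simpa using ((hgn.const_mul 2).add hDlim).add hgm
    have hstep2 : ∀ k, ψ (G (s (n k + 1)) (s (m k + 1)) (s (m k + 1))) ≤
        ψ (G (s (n k)) (s (m k)) (s (m k))) - φ (G (s (n k)) (s (m k)) (s (m k))) := by
      intro k
      have h := hcontr (s (n k)) (s (m k)) (s (m k)) (hmono (hm1 k).le) le_rfl
      rw [← hssucc (n k), ← hssucc (m k)] at h
      exact h
    exact key_aux hψc hφc hφ0 hφiff hε2 (fun k => hG.nonneg _ _ _) hDlim
      (fun k => hG.nonneg _ _ _) hElim hstep2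
  have hcauchy : GCauchy G s := by
    intro ε hε
    obtain ⟨N, hN⟩ := hC (ε / 2) (by positivity)
    refine ⟨N, fun a ha b hb c hc => ?_⟩
    have h1 : G (s a) (s b) (s c) ≤ G (s a) (s b) (s b) + G (s b) (s b) (s c) :=
      hG.rect _ _ _ _
    have h2 : G (s b) (s b) (s c) = G (s c) (s b) (s b) := hG.perm2 _ _
    have h3 := hN a ha b hb
    have h4 := hN c hc b hb
    linarith
  obtain ⟨x, hx⟩ := hcomp s hcauchy
  have hx' : Tendsto (fun n => G x (s n) (s n)) atTop (𝓝 0) := hx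
  have hTs : Tendsto (fun n => G (T x) (T (s n)) (T (s n))) atTop (𝓝 0) := hTcont s x hx
  have hTs' : Tendsto (fun n => G (T x) (s (n + 1)) (s (n + 1))) atTop (𝓝 0) := by
    simpa only [← hssucc] using hTs
  have h1 : Tendsto (fun n => G x (s (n + 1)) (s (n + 1))) atTop (𝓝 0) :=
    hx'.comp (tendsto_atTop_mono (fun k => Nat.le_succ k) tendsto_id)
  have hbnd : ∀ n, G (T x) x x ≤
      G (T x) (s (n + 1)) (s (n + 1)) + 2 * G x (s (n + 1)) (s (n + 1)) := by
    intro n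
    have r1 := hG.rect (T x) x x (s (n + 1))
    have r2 := hG.twoMul (s (n + 1)) x
    linarith
  have hlim : Tendsto (fun n => G (T x) (s (n + 1)) (s (n + 1)) +
      2 * G x (s (n + 1)) (s (n + 1))) atTop (𝓝 0) := by
    simpa using hTs'.add (h1.const_mul 2)
  have hle : G (T x) x x ≤ 0 := ge_of_tendsto hlim (Eventually.of_forall hbnd)
  exact ⟨x, hG.gzero (le_antisymm hle (hG.nonneg _ _ _))⟩
end
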